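/- If A and B are real n₁×n₂ matrices satisfying A Bᵀ = 0 and Aᵀ B = 0, then the nuclear norm is additive: ‖A + B‖_* = ‖A‖_* + ‖B‖_*. -/

import Mathlib

/-!
The nuclear norm is `‖A‖_* = tr √(AᵀA)`. The hypotheses make the Gram matrices add,
`(A + B)ᵀ(A + B) = AᵀA + BᵀB`, and annihilate each other, `AᵀA · BᵀB = 0`. For positive
semidefinite `P, Q` with `P Q = 0` the square roots annihilate each other as well, so
`(√P + √Q)² = P + Q` and `√(P + Q) = √P + √Q`; taking traces gives additivity.
-/

open Matrix
noncomputable def nuclearNorm {n₁ n₂ : ℕ} (A : Matrix (Fin n₁) (Fin n₂) ℝ) : ℝ :=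
  ∑ i, Real.sqrt ((show (Aᵀ * A).IsHermitian by
    simpa using Matrix.isHermitian_conjTranspose_mul_self A).eigenvalues i)

open scoped MatrixOrder ComplexOrder

namespace Matrix

lemma posSemidef_transpose_mul_self {m n : Type*} [Fintype m] [Finite n] (A : Matrix m n ℝ) :
    (Aᵀ * A).PosSemidef := by
  simpa using posSemidef_conjTranspose_mul_self A

variable {n 𝕜 : Type*} [Fintype n] [DecidableEq n] [RCLike 𝕜] {A B : Matrix n n 𝕜}

lemma IsHermitian.trace_cfc (hA : A.IsHermitian) (f : ℝ → ℝ) :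
    (cfc f A).trace = ∑ i, (f (hA.eigenvalues i) : 𝕜) := by
  rw [hA.cfc_eq, IsHermitian.cfc, Unitary.conjStarAlgAut_apply, trace_mul_cycle,
    Unitary.coe_star_mul_self, one_mul, trace_diagonal]
  rfl

lemma PosSemidef.trace_sqrt (hA : A.PosSemidef) :
    (CFC.sqrt A).trace = ∑ i, (√(hA.1.eigenvalues i) : 𝕜) := by
  rw [CFC.sqrt_eq_real_sqrt A hA.nonneg, cfcₙ_eq_cfc, hA.1.trace_cfc]

/-- `(√A B)ᴴ (√A B) = Bᴴ A B = 0`. -/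
lemma sqrt_mul_eq_zero_of_mul_eq_zero (hA : 0 ≤ A) (h : A * B = 0) : CFC.sqrt A * B = 0 := by
  rw [← conjTranspose_mul_self_eq_zero, conjTranspose_mul, (CFC.sqrt_nonneg A).posSemidef.1.eq,
    mul_assoc, ← mul_assoc (CFC.sqrt A), CFC.sqrt_mul_sqrt_self A, h, mul_zero]

lemma sqrt_mul_sqrt_eq_zero_of_mul_eq_zero (hA : 0 ≤ A) (hB : 0 ≤ B) (h : A * B = 0) :
    CFC.sqrt A * CFC.sqrt B = 0 := by
  have hSA : (CFC.sqrt A)ᴴ = CFC.sqrt A := (CFC.sqrt_nonneg A).posSemidef.1.eq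
  have hSB : (CFC.sqrt B)ᴴ = CFC.sqrt B := (CFC.sqrt_nonneg B).posSemidef.1.eq
  have hB_sqrtA : B * CFC.sqrt A = 0 := by
    simpa [conjTranspose_mul, hSA, hB.posSemidef.1.eq] using
      congrArg conjTranspose (sqrt_mul_eq_zero_of_mul_eq_zero hA h)
  simpa [conjTranspose_mul, hSA, hSB] using
    congrArg conjTranspose (sqrt_mul_eq_zero_of_mul_eq_zero hB hB_sqrtA)

lemma sqrt_add_of_mul_eq_zero (hA : 0 ≤ A) (hB : 0 ≤ B) (h : A * B = 0) :
    CFC.sqrt (A + B) = CFC.sqrt A + CFC.sqrt B := by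
  have hBA : B * A = 0 := by
    simpa [conjTranspose_mul, hA.posSemidef.1.eq, hB.posSemidef.1.eq] using
      congrArg conjTranspose h
  rw [CFC.sqrt_eq_iff _ _ (add_nonneg hA hB) (add_nonneg (CFC.sqrt_nonneg A) (CFC.sqrt_nonneg B)),
    add_mul, mul_add, mul_add, sqrt_mul_sqrt_eq_zero_of_mul_eq_zero hA hB h,
    sqrt_mul_sqrt_eq_zero_of_mul_eq_zero hB hA hBA, CFC.sqrt_mul_sqrt_self A,
    CFC.sqrt_mul_sqrt_self B, add_zero, zero_add]

end Matrix

lemma nuclearNorm_eq_trace_sqrt {n₁ n₂ : ℕ} (A : Matrix (Fin n₁) (Fin n₂) ℝ) :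
    nuclearNorm A = (CFC.sqrt (Aᵀ * A)).trace := by
  rw [(posSemidef_transpose_mul_self A).trace_sqrt]
  rfl

/-- If A Bᵀ = 0 and Aᵀ B = 0, the nuclear norm is additive. -/
theorem nuclearNorm_add_of_orthogonal {n₁ n₂ : ℕ}
    (A B : Matrix (Fin n₁) (Fin n₂) ℝ)
    (h₁ : A * Bᵀ = 0) (h₂ : Aᵀ * B = 0) :
    nuclearNorm (A + B) = nuclearNorm A + nuclearNorm B := by
  have hgram : (A + B)ᵀ * (A + B) = Aᵀ * A + Bᵀ * B := by
    have h₂' : Bᵀ * A = 0 := by simpa using congrArg transpose h₂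
    rw [transpose_add, Matrix.add_mul, Matrix.mul_add, Matrix.mul_add, h₂, h₂', add_zero,
      zero_add]
  have horth : (Aᵀ * A) * (Bᵀ * B) = 0 := by
    rw [Matrix.mul_assoc, ← Matrix.mul_assoc A, h₁, Matrix.zero_mul, Matrix.mul_zero]
  rw [nuclearNorm_eq_trace_sqrt, nuclearNorm_eq_trace_sqrt, nuclearNorm_eq_trace_sqrt, hgram,
    sqrt_add_of_mul_eq_zero (posSemidef_transpose_mul_self A).nonneg
      (posSemidef_transpose_mul_self B).nonneg horth, trace_add]
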